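/- Let f, g and h be entire functions given by everywhere absolutely convergent vector valued Dirichlet series, and let p ≥ 0, q ≥ 0, m ≥ 0 be integers. Assume 0 < λ_h^{(m,q)}(f) ≤ ρ_h^{(m,q)}(f) < +∞, and assume g is of regular relative (m,p) Ritt growth with respect to h with 0 < λ_h^{(m,p)}(g) = ρ_h^{(m,p)}(g) < +∞. Then λ_g^{(p,q)}(f) = λ_h^{(m,q)}(f)/ρ_h^{(m,p)}(g) and ρ_g^{(p,q)}(f) = ρ_h^{(m,q)}(f)/ρ_h^{(m,p)}(g). If in addition ρ_h^{(m,q)}(f) = ρ_h^{(m,p)}(g), then ρ_g^{(p,q)}(f) = λ_f^{(q,p)}(g) = 1. -/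

import Mathlib

open Filter Topology

noncomputable section

/-- An entire function given by an everywhere absolutely convergent
vector valued Dirichlet series, with coefficients in a Banach space `E`. -/
structure VVDS (E : Type*) [NormedAddCommGroup E] [NormedSpace ℂ E] [CompleteSpace E] where
  a : ℕ → E
  lam : ℕ → ℝ
  lam_pos : ∀ n, 0 < lam n
  lam_strictMono : StrictMono lam
  lam_tendsto : Tendsto lam atTop atTop
  log_index_bound : ∃ D : ℝ, ∀ᶠ n : ℕ in atTop, Real.log (n : ℝ) / lam n ≤ D
  coeff_decay : Tendsto (fun n => Real.log ‖a n‖ / lam n) atTop atBot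
  abs_conv : ∀ s : ℂ, Summable (fun n => Real.exp (s.re * lam n) * ‖a n‖)

variable {E F G : Type*} [NormedAddCommGroup E] [NormedSpace ℂ E] [CompleteSpace E]
  [NormedAddCommGroup F] [NormedSpace ℂ F] [CompleteSpace F]
  [NormedAddCommGroup G] [NormedSpace ℂ G] [CompleteSpace G]

/-- The entire function defined by the vector valued Dirichlet series. -/
def VVDS.toFun (f : VVDS E) (s : ℂ) : E := ∑' n, Complex.exp (s * (f.lam n : ℂ)) • f.a n

/-- The maximum modulus function `M_f(σ) = sup_t ‖f(σ+it)‖`. -/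
def VVDS.M (f : VVDS E) (σ : ℝ) : ℝ := ⨆ t : ℝ, ‖f.toFun ((σ : ℂ) + (t : ℂ) * Complex.I)‖

/-- The inverse function of the maximum modulus function. -/
def VVDS.Minv (f : VVDS E) (y : ℝ) : ℝ := sInf {σ : ℝ | y ≤ f.M σ}

/-- The (p,q)-th relative Ritt order of `f` with respect to `g`. -/
def relRittOrder (p q : ℕ) (f : VVDS E) (g : VVDS F) : EReal :=
  limsup (fun σ : ℝ =>
    ((Real.log^[p] (g.Minv (f.M σ)) / Real.log^[q] σ : ℝ) : EReal)) atTop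

/-- The (p,q)-th relative Ritt lower order of `f` with respect to `g`. -/
def relRittLowerOrder (p q : ℕ) (f : VVDS E) (g : VVDS F) : EReal :=
  liminf (fun σ : ℝ =>
    ((Real.log^[p] (g.Minv (f.M σ)) / Real.log^[q] σ : ℝ) : EReal)) atTop

/-- The (p,q)-th relative Ritt type of `f` with respect to `g`. -/
def relRittType (p q : ℕ) (f : VVDS E) (g : VVDS F) : EReal :=
  limsup (fun σ : ℝ =>
    ((Real.log^[p-1] (g.Minv (f.M σ)) /
      (Real.log^[q-1] σ) ^ (relRittOrder p q f g).toReal : ℝ) : EReal)) atTop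

/-- The (p,q)-th relative Ritt lower type of `f` with respect to `g`. -/
def relRittLowerType (p q : ℕ) (f : VVDS E) (g : VVDS F) : EReal :=
  liminf (fun σ : ℝ =>
    ((Real.log^[p-1] (g.Minv (f.M σ)) /
      (Real.log^[q-1] σ) ^ (relRittOrder p q f g).toReal : ℝ) : EReal)) atTop

/-- The (p,q)-th relative Ritt weak type of `f` with respect to `g`. -/
def relRittWeakType (p q : ℕ) (f : VVDS E) (g : VVDS F) : EReal :=
  liminf (fun σ : ℝ =>
    ((Real.log^[p-1] (g.Minv (f.M σ)) /
      (Real.log^[q-1] σ) ^ (relRittLowerOrder p q f g).toReal : ℝ) : EReal)) atTop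

/-- The growth indicator `τ̄_g^{(p,q)}(f)`. -/
def relRittUpperWeakType (p q : ℕ) (f : VVDS E) (g : VVDS F) : EReal :=
  limsup (fun σ : ℝ =>
    ((Real.log^[p-1] (g.Minv (f.M σ)) /
      (Real.log^[q-1] σ) ^ (relRittLowerOrder p q f g).toReal : ℝ) : EReal)) atTop

/-!
If `g` has regular growth with respect to `h`, i.e. `log^[m] M_h⁻¹(M_g s) ~ r · log^[p] s`, then
inverting this relation gives `log^[p] M_g⁻¹(y) ~ log^[m] M_h⁻¹(y) / r` as `y → ∞`. Although
`M_g⁻¹` is only a generalized inverse, the eventual monotonicity of `log^[m] ∘ M_h⁻¹` lets one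
compare `y` with `M_g` at the single point `s = exp^[p] (log^[m] M_h⁻¹(y) / c)`, for `c` close to
`r`. Putting `y = M_f σ`, the growth ratio of `f` relative to `g` is asymptotically `1/r` times the
one relative to `h`, so both its `limsup` and its `liminf` are divided by `r`.

If moreover `ρ_h(f) = r`, then `ρ_g(f) = 1`. The lower order of `g` relative to `f` is at most
`1/ρ_g(f)` because the two relative growth functions are essentially inverse to each other, and at
least `r/ρ_h(f)` by the same inversion argument applied to `f` instead of `g`.

The only analytic input is that `M_f` is nondecreasing (Phragmén–Lindelöf on vertical strips,
since `M_f → 0` at `-∞`) and unbounded unless `f ≡ 0` (Liouville).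
-/

namespace Real

lemma iterate_log_iterate_exp (p : ℕ) (x : ℝ) : log^[p] (exp^[p] x) = x := by
  induction p generalizing x with
  | zero => rfl
  | succ p ih =>
    rw [Function.iterate_succ_apply' (f := exp), Function.iterate_succ_apply, log_exp, ih]

lemma le_iterate_exp (p : ℕ) (x : ℝ) : x ≤ exp^[p] x := by
  induction p with
  | zero => exact le_rfl
  | succ p ih =>
    rw [Function.iterate_succ_apply']
    linarith [add_one_le_exp (exp^[p] x)]

lemma tendsto_iterate_log (p : ℕ) : Tendsto log^[p] atTop atTop := by
  induction p with
  | zero => exact tendsto_id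
  | succ p ih => rw [Function.iterate_succ]; exact ih.comp tendsto_log_atTop

lemma monotoneOn_iterate_log (p : ℕ) : MonotoneOn log^[p] (Set.Ici (exp^[p] 1)) := by
  induction p with
  | zero => exact monotone_id.monotoneOn _
  | succ p ih =>
    have hpos : ∀ x ∈ Set.Ici (exp^[p + 1] 1), 0 < x := fun x hx =>
      (exp_pos _).trans_le (by rwa [Function.iterate_succ_apply'] at hx)
    rw [Function.iterate_succ]
    refine ih.comp (strictMonoOn_log.monotoneOn.mono hpos) fun x hx => ?_
    rw [Set.mem_Ici, le_log_iff_exp_le (hpos x hx), ← Function.iterate_succ_apply' (f := exp)]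
    exact hx

lemma iterate_log_le_of_le_iterate_exp {p : ℕ} {s x : ℝ} (hs : exp^[p] 1 ≤ s)
    (hsx : s ≤ exp^[p] x) : log^[p] s ≤ x :=
  iterate_log_iterate_exp p x ▸ monotoneOn_iterate_log p hs (hs.trans hsx) hsx

end Real

namespace EReal

variable {α : Type*} {l : Filter α} [l.NeBot] {a b : α → ℝ} {c : ℝ}

lemma limsup_coe_mul_of_tendsto (ha : Tendsto a l (𝓝 c)) (hc : 0 < c)
    (hb : ∀ᶠ x in l, 0 ≤ b x) :
    limsup (fun x => ((a x * b x : ℝ) : EReal)) l = c * limsup (fun x => (b x : EReal)) l := by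
  have hu : Tendsto (fun x => (a x : EReal)) l (𝓝 c) := tendsto_coe.2 ha
  have hu0 : ∀ᶠ x in l, (0 : EReal) ≤ a x :=
    (ha.eventually (eventually_gt_nhds hc)).mono fun x hx => by exact_mod_cast hx.le
  have hv0 : ∀ᶠ x in l, (0 : EReal) ≤ b x := hb.mono fun x hx => by exact_mod_cast hx
  simp_rw [coe_mul]
  refine le_antisymm ?_ ?_
  · calc limsup (fun x => (a x : EReal) * b x) l
        ≤ limsup (fun x => (a x : EReal)) l * limsup (fun x => (b x : EReal)) l :=
          limsup_mul_le hu0.frequently hv0 (.inl (by rw [hu.limsup_eq]; exact_mod_cast hc.ne'))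
            (.inl (by rw [hu.limsup_eq]; exact coe_ne_top c))
      _ = c * limsup (fun x => (b x : EReal)) l := by rw [hu.limsup_eq]
  · calc c * limsup (fun x => (b x : EReal)) l
        = limsup (fun x => (b x : EReal)) l * liminf (fun x => (a x : EReal)) l := by
          rw [hu.liminf_eq, mul_comm]
      _ ≤ limsup (fun x => (b x : EReal) * a x) l := le_limsup_mul hv0.frequently hu0
      _ = limsup (fun x => (a x : EReal) * b x) l := by simp_rw [mul_comm]

lemma liminf_coe_mul_of_tendsto (ha : Tendsto a l (𝓝 c)) (hc : 0 < c)
    (hb : ∀ᶠ x in l, 0 ≤ b x) :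
    liminf (fun x => ((a x * b x : ℝ) : EReal)) l = c * liminf (fun x => (b x : EReal)) l := by
  have hu : Tendsto (fun x => (a x : EReal)) l (𝓝 c) := tendsto_coe.2 ha
  have hu0 : ∀ᶠ x in l, (0 : EReal) ≤ a x :=
    (ha.eventually (eventually_gt_nhds hc)).mono fun x hx => by exact_mod_cast hx.le
  have hv0 : ∀ᶠ x in l, (0 : EReal) ≤ b x := hb.mono fun x hx => by exact_mod_cast hx
  simp_rw [coe_mul]
  refine le_antisymm ?_ ?_
  · calc liminf (fun x => (a x : EReal) * b x) l
        ≤ limsup (fun x => (a x : EReal)) l * liminf (fun x => (b x : EReal)) l :=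
          liminf_mul_le hu0 hv0 (.inl (by rw [hu.limsup_eq]; exact_mod_cast hc.ne'))
            (.inl (by rw [hu.limsup_eq]; exact coe_ne_top c))
      _ = c * liminf (fun x => (b x : EReal)) l := by rw [hu.limsup_eq]
  · calc c * liminf (fun x => (b x : EReal)) l
        = liminf (fun x => (a x : EReal)) l * liminf (fun x => (b x : EReal)) l := by
          rw [hu.liminf_eq]
      _ ≤ liminf (fun x => (a x : EReal) * b x) l := le_liminf_mul hu0 hv0

lemma coe_inv_mul_eq_coe_toReal_div {x : EReal} (hx : x ≠ ⊤) (hx' : x ≠ ⊥) (r : ℝ) :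
    ((r⁻¹ : ℝ) : EReal) * x = ((x.toReal / r : ℝ) : EReal) := by
  lift x to ℝ using ⟨hx, hx'⟩
  rw [toReal_coe, ← coe_mul, inv_mul_eq_div]

end EReal

namespace VVDS

variable (f : VVDS E)

def majorant (σ : ℝ) : ℝ := ∑' n, Real.exp (σ * f.lam n) * ‖f.a n‖

lemma summable_majorant (σ : ℝ) : Summable fun n => Real.exp (σ * f.lam n) * ‖f.a n‖ := by
  simpa using f.abs_conv σ

lemma norm_exp_smul (s : ℂ) (n : ℕ) :
    ‖Complex.exp (s * f.lam n) • f.a n‖ = Real.exp (s.re * f.lam n) * ‖f.a n‖ := by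
  rw [norm_smul, Complex.norm_exp, Complex.re_mul_ofReal]

lemma norm_toFun_le_majorant (s : ℂ) : ‖f.toFun s‖ ≤ f.majorant s.re := by
  simp only [majorant, ← f.norm_exp_smul s]
  exact norm_tsum_le_tsum_norm (by simpa only [f.norm_exp_smul s] using f.summable_majorant s.re)

lemma majorant_mono : Monotone f.majorant := fun σ₁ σ₂ h =>
  (f.summable_majorant σ₁).tsum_le_tsum (fun n => mul_le_mul_of_nonneg_right
    (Real.exp_le_exp.2 (mul_le_mul_of_nonneg_right h (f.lam_pos n).le)) (norm_nonneg _))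
    (f.summable_majorant σ₂)

lemma tendsto_majorant_atBot : Tendsto f.majorant atBot (𝓝 0) := by
  have hterm (n : ℕ) : Tendsto (fun σ : ℝ => Real.exp (σ * f.lam n) * ‖f.a n‖) atBot (𝓝 0) := by
    simpa using ((Real.tendsto_exp_atBot.comp
      (tendsto_id.atBot_mul_const (f.lam_pos n))).mul_const ‖f.a n‖)
  have hbound : ∀ᶠ σ : ℝ in atBot, ∀ n, ‖Real.exp (σ * f.lam n) * ‖f.a n‖‖ ≤ ‖f.a n‖ := by
    filter_upwards [eventually_le_atBot 0] with σ hσ n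
    rw [norm_mul, Real.norm_of_nonneg (Real.exp_pos _).le, norm_norm]
    exact mul_le_of_le_one_left (norm_nonneg _)
      (Real.exp_le_one_iff.2 (mul_nonpos_of_nonpos_of_nonneg hσ (f.lam_pos n).le))
  unfold majorant
  simpa using tendsto_tsum_of_dominated_convergence
    (by simpa using f.summable_majorant 0) hterm hbound

lemma differentiable_toFun : Differentiable ℂ f.toFun := by
  intro s
  have hopen : IsOpen {z : ℂ | z.re < s.re + 1} :=
    isOpen_lt Complex.continuous_re continuous_const
  have hunif : TendstoUniformlyOn
      (fun (t : Finset ℕ) (z : ℂ) => ∑ n ∈ t, Complex.exp (z * f.lam n) • f.a n)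
      f.toFun atTop {z : ℂ | z.re < s.re + 1} := by
    refine tendstoUniformlyOn_tsum (f.summable_majorant (s.re + 1)) fun n z hz => ?_
    rw [f.norm_exp_smul z]
    exact mul_le_mul_of_nonneg_right (Real.exp_le_exp.2
      (mul_le_mul_of_nonneg_right (le_of_lt hz) (f.lam_pos n).le)) (norm_nonneg _)
  refine (hunif.tendstoLocallyUniformlyOn.differentiableOn (Eventually.of_forall fun t =>
    DifferentiableOn.fun_sum fun n _ => ?_) hopen).differentiableAt
    (hopen.mem_nhds (by simp))
  exact ((differentiable_id.mul_const _).cexp.smul_const (f.a n)).differentiableOn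

lemma bddAbove_norm_toFun (σ : ℝ) :
    BddAbove (Set.range fun t : ℝ => ‖f.toFun (σ + t * Complex.I)‖) :=
  ⟨f.majorant σ, by
    rintro _ ⟨t, rfl⟩
    simpa using f.norm_toFun_le_majorant (σ + t * Complex.I)⟩

lemma norm_toFun_le_M (s : ℂ) : ‖f.toFun s‖ ≤ f.M s.re := by
  have h := le_ciSup (f.bddAbove_norm_toFun s.re) s.im
  rwa [Complex.re_add_im] at h

lemma M_nonneg (σ : ℝ) : 0 ≤ f.M σ :=
  (norm_nonneg _).trans (le_ciSup (f.bddAbove_norm_toFun σ) 0)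

lemma M_le_majorant (σ : ℝ) : f.M σ ≤ f.majorant σ :=
  ciSup_le fun t => by simpa using f.norm_toFun_le_majorant (σ + t * Complex.I)

lemma tendsto_M_atBot : Tendsto f.M atBot (𝓝 0) :=
  tendsto_of_tendsto_of_tendsto_of_le_of_le tendsto_const_nhds f.tendsto_majorant_atBot
    f.M_nonneg f.M_le_majorant

lemma M_mono : Monotone f.M := by
  intro σ₁ σ₂ h12
  refine ciSup_le fun t => le_of_forall_pos_le_add fun ε hε => ?_
  obtain ⟨a, haε, haσ⟩ :=
    ((f.tendsto_M_atBot.eventually (ge_mem_nhds hε)).and (eventually_lt_atBot σ₁)).exists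
  have hbound : ∀ z : ℂ, z.re ≤ σ₂ → ‖f.toFun z‖ ≤ f.majorant σ₂ := fun z hz =>
    (f.norm_toFun_le_majorant z).trans (f.majorant_mono hz)
  refine PhragmenLindelof.vertical_strip (a := a) (b := σ₂) f.differentiable_toFun.diffContOnCl
    ⟨0, div_pos Real.pi_pos (by linarith), 0, ?_⟩ (fun z hz => ?_) (fun z hz => ?_)
    (by simpa using haσ.le) (by simpa using h12)
  · refine Asymptotics.IsBigO.of_bound (f.majorant σ₂) ?_
    rw [eventually_inf_principal]
    exact Eventually.of_forall fun z hz => by simpa using hbound z hz.2.le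
  · calc ‖f.toFun z‖ ≤ f.M a := hz ▸ f.norm_toFun_le_M z
      _ ≤ f.M σ₂ + ε := by linarith [f.M_nonneg σ₂]
  · linarith [hz ▸ f.norm_toFun_le_M z]

lemma tendsto_M_or_eq_zero : Tendsto f.M atTop atTop ∨ ∀ σ, f.M σ = 0 := by
  by_cases hb : BddAbove (Set.range f.M)
  · right
    obtain ⟨B, hB⟩ := hb
    have hconst : ∀ s : ℂ, f.toFun s = f.toFun 0 := fun s =>
      f.differentiable_toFun.apply_eq_apply_of_bounded
        (isBounded_iff_forall_norm_le.2 ⟨B, by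
          rintro _ ⟨s, rfl⟩
          exact (f.norm_toFun_le_M s).trans (hB ⟨s.re, rfl⟩)⟩) s 0
    have hzero : ∀ s : ℂ, ‖f.toFun s‖ = 0 := fun s =>
      le_antisymm (ge_of_tendsto f.tendsto_M_atBot (Eventually.of_forall fun σ => by
        simpa [hconst] using f.norm_toFun_le_M σ)) (norm_nonneg _)
    exact fun σ => le_antisymm (ciSup_le fun t => (hzero _).le) (f.M_nonneg σ)
  · left
    simp only [not_bddAbove_iff, Set.mem_range, exists_exists_eq_and] at hb
    exact f.M_mono.tendsto_atTop_atTop fun b => (hb b).imp fun _ h => h.le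

lemma bddBelow_setOf_le_M {y : ℝ} (hy : 0 < y) : BddBelow {σ | y ≤ f.M σ} := by
  obtain ⟨σ₀, hσ₀⟩ := eventually_atBot.1 (f.tendsto_M_atBot.eventually (gt_mem_nhds hy))
  exact ⟨σ₀, fun σ hσ => le_of_not_gt fun hlt => (hσ₀ σ hlt.le).not_ge hσ⟩

lemma Minv_le {y σ : ℝ} (hy : 0 < y) (hσ : y ≤ f.M σ) : f.Minv y ≤ σ :=
  csInf_le (f.bddBelow_setOf_le_M hy) hσ

lemma Minv_of_nonpos {y : ℝ} (hy : y ≤ 0) : f.Minv y = 0 := by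
  have huniv : {σ | y ≤ f.M σ} = Set.univ :=
    Set.eq_univ_of_forall fun σ => hy.trans (f.M_nonneg σ)
  rw [Minv, huniv, Real.sInf_of_not_bddBelow not_bddBelow_univ]

variable {f}

lemma le_Minv (hf : Tendsto f.M atTop atTop) {y b : ℝ} (hb : ∀ σ, y ≤ f.M σ → b ≤ σ) :
    b ≤ f.Minv y :=
  le_csInf (hf.eventually_ge_atTop y).exists hb

lemma monotoneOn_Minv (hf : Tendsto f.M atTop atTop) : MonotoneOn f.Minv (Set.Ioi 0) :=
  fun _ hy₁ y₂ _ h => csInf_le_csInf (f.bddBelow_setOf_le_M hy₁)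
    (hf.eventually_ge_atTop y₂).exists fun _ hσ => h.trans hσ

lemma tendsto_Minv (hf : Tendsto f.M atTop atTop) : Tendsto f.Minv atTop atTop := by
  refine tendsto_atTop.2 fun b => ?_
  filter_upwards [eventually_gt_atTop (f.M b)] with y hy
  exact le_Minv hf fun σ hσ => le_of_not_gt fun hlt => (hy.trans_le hσ).not_ge (f.M_mono hlt.le)

lemma exists_monotoneOn_iterate_log_Minv (hf : Tendsto f.M atTop atTop) (m : ℕ) :
    ∃ a, MonotoneOn (fun y => Real.log^[m] (f.Minv y)) (Set.Ici a) := by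
  obtain ⟨a, ha⟩ := eventually_atTop.1 ((tendsto_Minv hf).eventually_ge_atTop (Real.exp^[m] 1))
  refine ⟨max a 1, fun y (hy : max a 1 ≤ y) y' (hy' : max a 1 ≤ y') hyy' =>
    Real.monotoneOn_iterate_log m (ha y (le_of_max_le_left hy)) (ha y' (le_of_max_le_left hy'))
      (monotoneOn_Minv hf (Set.mem_Ioi.2 (zero_lt_one.trans_le (le_of_max_le_right hy)))
        (Set.mem_Ioi.2 (zero_lt_one.trans_le (le_of_max_le_right hy'))) hyy')⟩

end VVDS

open VVDS

section Inversion

variable {g : VVDS F} {Φ : ℝ → ℝ} {a c : ℝ} {p : ℕ}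

lemma eventually_div_le_iterate_log_Minv (hg : Tendsto g.M atTop atTop)
    (hΦ : MonotoneOn Φ (Set.Ici a)) (hΦt : Tendsto Φ atTop atTop) (hc : 0 < c)
    (hgrowth : ∀ᶠ s in atTop, Φ (g.M s) < c * Real.log^[p] s) :
    ∀ᶠ y in atTop, Φ y / c ≤ Real.log^[p] (g.Minv y) := by
  obtain ⟨S, hS⟩ := eventually_atTop.1 (hgrowth.and (eventually_ge_atTop (Real.exp^[p] 1)))
  filter_upwards [eventually_ge_atTop a, eventually_gt_atTop (g.M S),
    hΦt.eventually_ge_atTop c] with y hya hyS hyc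
  have hx : Real.exp^[p] 1 ≤ Real.exp^[p] (Φ y / c) :=
    Real.exp_monotone.iterate p ((one_le_div hc).2 hyc)
  have key : Real.exp^[p] (Φ y / c) ≤ g.Minv y := le_Minv hg fun s hs => by
    have hSs : S ≤ s := le_of_not_gt fun hlt => (hyS.trans_le hs).not_ge (g.M_mono hlt.le)
    obtain ⟨hΦs, hs1⟩ := hS s hSs
    refine le_of_not_gt fun hlt => (hΦ hya (hya.trans hs) hs).not_gt (hΦs.trans_le ?_)
    exact (le_div_iff₀' hc).1 (Real.iterate_log_le_of_le_iterate_exp hs1 hlt.le)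
  calc Φ y / c = Real.log^[p] (Real.exp^[p] (Φ y / c)) := (Real.iterate_log_iterate_exp p _).symm
    _ ≤ Real.log^[p] (g.Minv y) := Real.monotoneOn_iterate_log p hx (hx.trans key) key

lemma eventually_iterate_log_Minv_le_div (hg : Tendsto g.M atTop atTop)
    (hΦ : MonotoneOn Φ (Set.Ici a)) (hΦt : Tendsto Φ atTop atTop) (hc : 0 < c)
    (hgrowth : ∀ᶠ s in atTop, c * Real.log^[p] s < Φ (g.M s)) :
    ∀ᶠ y in atTop, Real.log^[p] (g.Minv y) ≤ Φ y / c := by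
  obtain ⟨S, hS⟩ := eventually_atTop.1 (hgrowth.and (hg.eventually_ge_atTop a))
  filter_upwards [eventually_ge_atTop a, eventually_gt_atTop 0, hΦt.eventually_ge_atTop (c * S),
    (tendsto_Minv hg).eventually_ge_atTop (Real.exp^[p] 1)] with y hya hy0 hyS hyM
  set s := Real.exp^[p] (Φ y / c)
  have hLs : Real.log^[p] s = Φ y / c := Real.iterate_log_iterate_exp p _
  obtain ⟨hΦs, has⟩ := hS s (((le_div_iff₀' hc).2 hyS).trans (Real.le_iterate_exp p _))
  rw [hLs, mul_div_cancel₀ _ hc.ne'] at hΦs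
  have hys : y ≤ g.M s := le_of_not_gt fun hlt => (hΦ has hya hlt.le).not_gt hΦs
  have hMs := g.Minv_le hy0 hys
  exact hLs ▸ Real.monotoneOn_iterate_log p hyM (hyM.trans hMs) hMs

lemma tendsto_iterate_log_Minv_div (hg : Tendsto g.M atTop atTop)
    (hΦ : MonotoneOn Φ (Set.Ici a)) (hΦt : Tendsto Φ atTop atTop) {r : ℝ} (hr : 0 < r)
    (hreg : Tendsto (fun s => Φ (g.M s) / Real.log^[p] s) atTop (𝓝 r)) :
    Tendsto (fun y => Real.log^[p] (g.Minv y) / Φ y) atTop (𝓝 r⁻¹) := by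
  have hLp : ∀ᶠ s in atTop, 0 < Real.log^[p] s := (Real.tendsto_iterate_log p).eventually_gt_atTop 0
  refine tendsto_order.2 ⟨fun b hb => ?_, fun b hb => ?_⟩
  · obtain ⟨d, hbd, hdr⟩ := exists_between (max_lt hb (inv_pos.2 hr))
    have hd : 0 < d := (le_max_right _ _).trans_lt hbd
    have hgrowth : ∀ᶠ s in atTop, Φ (g.M s) < d⁻¹ * Real.log^[p] s := by
      filter_upwards [hreg.eventually (gt_mem_nhds ((lt_inv_comm₀ hd hr).1 hdr)), hLp]
        with s hs hs0
      exact (div_lt_iff₀ hs0).1 hs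
    filter_upwards [eventually_div_le_iterate_log_Minv hg hΦ hΦt (inv_pos.2 hd) hgrowth,
      hΦt.eventually_gt_atTop 0] with y hy hy0
    calc b < d := (le_max_left _ _).trans_lt hbd
      _ = Φ y / d⁻¹ / Φ y := by field_simp
      _ ≤ _ := div_le_div_of_nonneg_right hy hy0.le
  · obtain ⟨d, hrd, hdb⟩ := exists_between hb
    have hd : 0 < d := (inv_pos.2 hr).trans hrd
    have hgrowth : ∀ᶠ s in atTop, d⁻¹ * Real.log^[p] s < Φ (g.M s) := by
      filter_upwards [hreg.eventually (lt_mem_nhds ((inv_lt_comm₀ hr hd).1 hrd)), hLp]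
        with s hs hs0
      exact (lt_div_iff₀ hs0).1 hs
    filter_upwards [eventually_iterate_log_Minv_le_div hg hΦ hΦt (inv_pos.2 hd) hgrowth,
      hΦt.eventually_gt_atTop 0] with y hy hy0
    calc _ ≤ Φ y / d⁻¹ / Φ y := div_le_div_of_nonneg_right hy hy0.le
      _ = d := by field_simp
      _ < b := hdb

end Inversion

section RelativeOrder

variable {f : VVDS E} {g : VVDS F} {h : VVDS G} {p q m : ℕ}

lemma frequently_iterate_log_Minv_le (hf : Tendsto f.M atTop atTop)
    (hg : Tendsto g.M atTop atTop) {c : ℝ} (hc : 0 < c)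
    (hfreq : ∃ᶠ σ in atTop, c * Real.log^[q] σ < Real.log^[p] (g.Minv (f.M σ))) :
    ∃ᶠ s in atTop, c * Real.log^[q] (f.Minv (g.M s)) ≤ Real.log^[p] s := by
  obtain ⟨S, hS⟩ := eventually_atTop.1 ((hg.eventually_gt_atTop 0).and
    (((tendsto_Minv hf).comp hg).eventually_ge_atTop (Real.exp^[q] 1)))
  refine frequently_atTop.2 fun B => ?_
  have hσ : ∀ᶠ σ in atTop, max B S ≤ c * Real.log^[q] σ ∧ Real.exp^[q] 1 ≤ σ ∧ 0 < f.M σ ∧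
      Real.exp^[p] 1 ≤ g.Minv (f.M σ) :=
    (((Real.tendsto_iterate_log q).const_mul_atTop hc).eventually_ge_atTop _).and <|
      (eventually_ge_atTop _).and <| (hf.eventually_gt_atTop 0).and <|
        ((tendsto_Minv hg).comp hf).eventually_ge_atTop _
  obtain ⟨σ, hlt, hσB, hσq, hMf, hMinv⟩ := (hfreq.and_eventually hσ).exists
  set s := Real.exp^[p] (c * Real.log^[q] σ)
  have hsB : max B S ≤ s := hσB.trans (Real.le_iterate_exp p _)
  obtain ⟨hgs, hMinvs⟩ := hS s ((le_max_right _ _).trans hsB)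
  have hMs : g.M s < f.M σ := lt_of_not_ge fun hle =>
    hlt.not_ge (Real.iterate_log_le_of_le_iterate_exp hMinv (g.Minv_le hMf hle))
  have hle : f.Minv (g.M s) ≤ σ := f.Minv_le hgs hMs.le
  refine ⟨s, (le_max_left _ _).trans hsB, ?_⟩
  calc c * Real.log^[q] (f.Minv (g.M s)) ≤ c * Real.log^[q] σ :=
        mul_le_mul_of_nonneg_left (Real.monotoneOn_iterate_log q hMinvs (hMinvs.trans hle) hle)
          hc.le
    _ = Real.log^[p] s := (Real.iterate_log_iterate_exp p _).symm

lemma tendsto_M_of_relRittLowerOrder_pos (hpos : 0 < relRittLowerOrder p q f g) :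
    Tendsto f.M atTop atTop ∧ Tendsto g.M atTop atTop := by
  -- if `f ≡ 0` or `g ≡ 0`, then `g.Minv (f.M σ)` is the `sInf` of `univ` or of `∅`, i.e. `0`
  have hne : ¬ ∀ᶠ σ in atTop, g.Minv (f.M σ) = 0 := fun h0 => by
    have : relRittLowerOrder p q f g = 0 := by
      rw [relRittLowerOrder, liminf_congr (h0.mono fun σ hσ => ?_), liminf_const]
      rw [hσ, Function.iterate_fixed Real.log_zero, zero_div, EReal.coe_zero]
    exact hpos.ne' this
  have hf : Tendsto f.M atTop atTop := f.tendsto_M_or_eq_zero.resolve_right fun hf0 =>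
    hne (Eventually.of_forall fun σ => by rw [hf0, g.Minv_of_nonpos le_rfl])
  refine ⟨hf, g.tendsto_M_or_eq_zero.resolve_right fun hg0 => hne ?_⟩
  filter_upwards [hf.eventually_gt_atTop 0] with σ hσ
  simp [VVDS.Minv, hg0, not_le.2 hσ]

lemma tendsto_of_relRittLowerOrder_eq_relRittOrder {r : ℝ}
    (hreg : relRittLowerOrder p q f g = relRittOrder p q f g) (hr : relRittOrder p q f g = r) :
    Tendsto (fun σ => Real.log^[p] (g.Minv (f.M σ)) / Real.log^[q] σ) atTop (𝓝 r) :=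
  EReal.tendsto_coe.1 (tendsto_of_liminf_eq_limsup (hreg.trans hr) hr)

theorem relRittOrder_and_relRittLowerOrder_eq_inv_mul (hf : Tendsto f.M atTop atTop)
    (hh : Tendsto h.M atTop atTop) (hg : Tendsto g.M atTop atTop) {r : ℝ} (hr : 0 < r)
    (hreg : Tendsto (fun s => Real.log^[m] (h.Minv (g.M s)) / Real.log^[p] s) atTop (𝓝 r)) :
    relRittOrder p q f g = ((r⁻¹ : ℝ) : EReal) * relRittOrder m q f h ∧
      relRittLowerOrder p q f g = ((r⁻¹ : ℝ) : EReal) * relRittLowerOrder m q f h := by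
  obtain ⟨a, hΦ⟩ := exists_monotoneOn_iterate_log_Minv hh m
  have hΦt : Tendsto (fun y => Real.log^[m] (h.Minv y)) atTop atTop :=
    (Real.tendsto_iterate_log m).comp (tendsto_Minv hh)
  have hratio := (tendsto_iterate_log_Minv_div hg hΦ hΦt hr hreg).comp hf
  have hU : ∀ᶠ σ in atTop, 0 < Real.log^[m] (h.Minv (f.M σ)) := (hΦt.comp hf).eventually_gt_atTop 0
  have hLq : ∀ᶠ σ in atTop, 0 < Real.log^[q] σ := (Real.tendsto_iterate_log q).eventually_gt_atTop 0
  have hnonneg : ∀ᶠ σ in atTop, 0 ≤ Real.log^[m] (h.Minv (f.M σ)) / Real.log^[q] σ := by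
    filter_upwards [hU, hLq] with σ h1 h2
    positivity
  have hfactor : ∀ᶠ σ in atTop, (((Real.log^[p] (g.Minv (f.M σ)) / Real.log^[m] (h.Minv (f.M σ))) *
      (Real.log^[m] (h.Minv (f.M σ)) / Real.log^[q] σ) : ℝ) : EReal) =
      ((Real.log^[p] (g.Minv (f.M σ)) / Real.log^[q] σ : ℝ) : EReal) := by
    filter_upwards [hU] with σ hσ
    rw [div_mul_div_cancel₀ hσ.ne']
  exact ⟨(limsup_congr hfactor).symm.trans
      (EReal.limsup_coe_mul_of_tendsto hratio (inv_pos.2 hr) hnonneg),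
    (liminf_congr hfactor).symm.trans
      (EReal.liminf_coe_mul_of_tendsto hratio (inv_pos.2 hr) hnonneg)⟩

lemma coe_div_le_relRittLowerOrder (hf : Tendsto f.M atTop atTop) (hh : Tendsto h.M atTop atTop)
    (hg : Tendsto g.M atTop atTop) {r : ℝ}
    (hreg : Tendsto (fun s => Real.log^[m] (h.Minv (g.M s)) / Real.log^[p] s) atTop (𝓝 r))
    {c : ℝ} (hc : 0 < c) (hlt : relRittOrder m q f h < c) :
    ((r / c : ℝ) : EReal) ≤ relRittLowerOrder q p g f := by
  obtain ⟨a, hΦ⟩ := exists_monotoneOn_iterate_log_Minv hh m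
  have hΦt : Tendsto (fun y => Real.log^[m] (h.Minv y)) atTop atTop :=
    (Real.tendsto_iterate_log m).comp (tendsto_Minv hh)
  have hgrowth : ∀ᶠ σ in atTop, Real.log^[m] (h.Minv (f.M σ)) < c * Real.log^[q] σ := by
    filter_upwards [eventually_lt_of_limsup_lt hlt,
      (Real.tendsto_iterate_log q).eventually_gt_atTop 0] with σ h1 h2
    rw [← div_lt_iff₀ h2]
    exact_mod_cast h1
  have hbound := hg.eventually (eventually_div_le_iterate_log_Minv hf hΦ hΦt hc hgrowth)
  rw [← (EReal.tendsto_coe.2 (hreg.div_const c)).liminf_eq]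
  refine liminf_le_liminf ?_
  filter_upwards [hbound, (Real.tendsto_iterate_log p).eventually_gt_atTop 0] with s hs hs0
  rw [EReal.coe_le_coe_iff, div_right_comm]
  exact div_le_div_of_nonneg_right hs hs0.le

lemma relRittLowerOrder_le_inv (hf : Tendsto f.M atTop atTop) (hg : Tendsto g.M atTop atTop)
    {c : ℝ} (hc : 0 < c) (hlt : (c : EReal) < relRittOrder p q f g) :
    relRittLowerOrder q p g f ≤ ((c⁻¹ : ℝ) : EReal) := by
  have hfreq : ∃ᶠ σ in atTop, c * Real.log^[q] σ < Real.log^[p] (g.Minv (f.M σ)) :=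
    ((frequently_lt_of_lt_limsup (by isBoundedDefault) hlt).and_eventually
      ((Real.tendsto_iterate_log q).eventually_gt_atTop 0)).mono fun σ ⟨h1, h2⟩ =>
        (lt_div_iff₀ h2).1 (EReal.coe_lt_coe_iff.1 h1)
  refine liminf_le_of_frequently_le (((frequently_iterate_log_Minv_le hf hg hc hfreq).and_eventually
    ((Real.tendsto_iterate_log p).eventually_gt_atTop 0)).mono fun s ⟨h1, h2⟩ => ?_)
    (by isBoundedDefault)
  rw [EReal.coe_le_coe_iff, div_le_iff₀ h2, ← div_eq_inv_mul]
  exact (le_div_iff₀' hc).2 h1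

lemma relRittLowerOrder_eq_one (hf : Tendsto f.M atTop atTop) (hh : Tendsto h.M atTop atTop)
    (hg : Tendsto g.M atTop atTop) {r : ℝ} (hr : 0 < r)
    (hreg : Tendsto (fun s => Real.log^[m] (h.Minv (g.M s)) / Real.log^[p] s) atTop (𝓝 r))
    (hfr : relRittOrder m q f h = r) (hfg : relRittOrder p q f g = 1) :
    relRittLowerOrder q p g f = 1 := by
  refine le_antisymm
    (ge_of_tendsto (f := fun c : ℝ => ((c⁻¹ : ℝ) : EReal)) (x := 𝓝[<] 1) ?_ ?_)
    (le_of_tendsto (f := fun c : ℝ => ((r / c : ℝ) : EReal)) (x := 𝓝[>] r) ?_ ?_)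
  · simpa using EReal.tendsto_coe.2
      ((continuousAt_inv₀ one_ne_zero).tendsto.mono_left nhdsWithin_le_nhds)
  · filter_upwards [Ioo_mem_nhdsLT one_pos] with c hc
    exact relRittLowerOrder_le_inv hf hg hc.1 (hfg ▸ by exact_mod_cast hc.2)
  · simpa [hr.ne'] using EReal.tendsto_coe.2
      (((continuousAt_const (y := r)).div continuousAt_id hr.ne').tendsto.mono_left
        (nhdsWithin_le_nhds (s := Set.Ioi r)))
  · filter_upwards [self_mem_nhdsWithin] with c hc
    exact coe_div_le_relRittLowerOrder hf hh hg hreg (hr.trans hc) (hfr ▸ by exact_mod_cast hc)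

end RelativeOrder

theorem stmt_2 (f : VVDS E) (g : VVDS F) (h : VVDS G) (p q m : ℕ)
    (hf1 : (0 : EReal) < relRittLowerOrder m q f h)
    (hf2 : relRittLowerOrder m q f h ≤ relRittOrder m q f h)
    (hf3 : relRittOrder m q f h < ⊤)
    (hg1 : (0 : EReal) < relRittLowerOrder m p g h)
    (hgr : relRittLowerOrder m p g h = relRittOrder m p g h)
    (hg3 : relRittOrder m p g h < ⊤)
    :
    relRittLowerOrder p q f g = (((relRittLowerOrder m q f h).toReal / (relRittOrder m p g h).toReal : ℝ) : EReal) ∧ relRittOrder p q f g = (((relRittOrder m q f h).toReal / (relRittOrder m p g h).toReal : ℝ) : EReal) ∧ (relRittOrder m q f h = relRittOrder m p g h → relRittOrder p q f g = 1 ∧ relRittLowerOrder q p g f = 1) := by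
  obtain ⟨hf, hh⟩ := tendsto_M_of_relRittLowerOrder_pos hf1
  have hg := (tendsto_M_of_relRittLowerOrder_pos hg1).1
  set r := (relRittOrder m p g h).toReal
  have hρgh : relRittOrder m p g h = r :=
    (EReal.coe_toReal hg3.ne (ne_bot_of_gt (hgr ▸ hg1))).symm
  have hr : 0 < r := by exact_mod_cast hρgh ▸ hgr ▸ hg1
  have hreg := tendsto_of_relRittLowerOrder_eq_relRittOrder hgr hρgh
  obtain ⟨hρ, hlow⟩ := relRittOrder_and_relRittLowerOrder_eq_inv_mul (q := q) hf hh hg hr hreg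
  refine ⟨?_, ?_, fun heq => ?_⟩
  · rw [hlow, EReal.coe_inv_mul_eq_coe_toReal_div (hf2.trans_lt hf3).ne (ne_bot_of_gt hf1)]
  · rw [hρ, EReal.coe_inv_mul_eq_coe_toReal_div hf3.ne (ne_bot_of_gt (hf1.trans_le hf2))]
  have hρ1 : relRittOrder p q f g = 1 := by
    rw [hρ, heq, hρgh, ← EReal.coe_mul, inv_mul_cancel₀ hr.ne', EReal.coe_one]
  exact ⟨hρ1, relRittLowerOrder_eq_one hf hh hg hr hreg (heq.trans hρgh) hρ1⟩
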